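/- The quotient of R_K by the coordinatewise sign action of {±1}^m is homeomorphic to cc(K) ⊆ [0,1]^m, via the map induced by the squaring map ρ(u)_i = u_i². -/
import Mathlib


def RMA (m : ℕ) (K : Set (Finset (Fin m))) : Set (Fin m → ℝ) :=
  ⋃ I ∈ K, {x | (∀ i ∈ I, x i ∈ Set.Icc (-1 : ℝ) 1) ∧ ∀ j ∉ I, x j = -1 ∨ x j = 1}

def ccK (m : ℕ) (K : Set (Finset (Fin m))) : Set (Fin m → ℝ) :=
  ⋃ I ∈ K, {y | (∀ i, y i ∈ Set.Icc (0 : ℝ) 1) ∧ ∀ j ∉ I, y j = 1}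

/-- The relation on `R_K` identifying points in the same orbit of the coordinatewise
sign action of `{±1}^m`. -/
def signRel (m : ℕ) (K : Set (Finset (Fin m))) : RMA m K → RMA m K → Prop :=
  fun x y => ∃ ε : Fin m → ℝ, (∀ i, ε i = 1 ∨ ε i = -1) ∧
    ∀ i, (y : Fin m → ℝ) i = ε i * (x : Fin m → ℝ) i

/-- The squaring map lands in `ccK`. -/
lemma rho_mem (m : ℕ) (K : Set (Finset (Fin m))) (x : RMA m K) :
    (fun i => ((x : Fin m → ℝ) i) ^ 2) ∈ ccK m K := by
  obtain ⟨I, hI, hx⟩ := Set.mem_iUnion₂.1 x.2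
  refine Set.mem_iUnion₂.2 ⟨I, hI, ?_, ?_⟩
  · intro i
    rcases Classical.em (i ∈ I) with hi | hi
    · obtain ⟨h1, h2⟩ := hx.1 i hi
      constructor
      · positivity
      · show ((x : Fin m → ℝ) i) ^ 2 ≤ 1
        nlinarith [h1, h2]
    · rcases hx.2 i hi with h | h <;> simp [h]
  · intro j hj
    rcases hx.2 j hj with h | h <;> simp [h]

/-- Coordinatewise square root maps `ccK` into `RMA`. -/
lemma sqrt_mem (m : ℕ) (K : Set (Finset (Fin m))) (y : ccK m K) :
    (fun i => Real.sqrt ((y : Fin m → ℝ) i)) ∈ RMA m K := by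
  obtain ⟨I, hI, hy⟩ := Set.mem_iUnion₂.1 y.2
  refine Set.mem_iUnion₂.2 ⟨I, hI, ?_, ?_⟩
  · intro i _
    obtain ⟨h0, h1⟩ := hy.1 i
    exact ⟨le_trans (by norm_num) (Real.sqrt_nonneg _), Real.sqrt_le_one.2 h1⟩
  · intro j hj
    right
    show Real.sqrt ((y : Fin m → ℝ) j) = 1
    rw [hy.2 j hj, Real.sqrt_one]

noncomputable def rhoMap (m : ℕ) (K : Set (Finset (Fin m))) : RMA m K → ccK m K :=
  fun x => ⟨fun i => ((x : Fin m → ℝ) i) ^ 2, rho_mem m K x⟩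

noncomputable def sqrtMap (m : ℕ) (K : Set (Finset (Fin m))) : ccK m K → RMA m K :=
  fun y => ⟨fun i => Real.sqrt ((y : Fin m → ℝ) i), sqrt_mem m K y⟩

lemma rho_compat (m : ℕ) (K : Set (Finset (Fin m))) :
    ∀ x y : RMA m K, signRel m K x y → rhoMap m K x = rhoMap m K y := by
  rintro x y ⟨ε, hε, hxy⟩
  apply Subtype.ext
  funext i
  show ((x : Fin m → ℝ) i) ^ 2 = ((y : Fin m → ℝ) i) ^ 2
  rw [hxy i]
  rcases hε i with h | h <;> rw [h] <;> ring

lemma abs_signRel (m : ℕ) (K : Set (Finset (Fin m))) (x : RMA m K)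
    (z : RMA m K) (hz : ∀ i, (z : Fin m → ℝ) i = |(x : Fin m → ℝ) i|) :
    signRel m K z x := by
  refine ⟨fun i => if 0 ≤ (x : Fin m → ℝ) i then 1 else -1,
    fun i => by by_cases h : 0 ≤ (x : Fin m → ℝ) i <;> simp [h], ?_⟩
  intro i
  rw [hz i]
  by_cases h : 0 ≤ (x : Fin m → ℝ) i
  · simp only [h, if_pos]
    rw [abs_of_nonneg h]; ring
  · simp only [h, if_neg, not_false_iff]
    rw [abs_of_neg (lt_of_not_ge h)]; ring

lemma ccK_nonneg (m : ℕ) (K : Set (Finset (Fin m))) (y : ccK m K) (i : Fin m) :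
    0 ≤ (y : Fin m → ℝ) i := by
  obtain ⟨I, hI, hy⟩ := Set.mem_iUnion₂.1 y.2
  exact (hy.1 i).1

lemma RMA_isCompact (m : ℕ) (K : Set (Finset (Fin m))) : IsCompact (RMA m K) := by
  have hsub : RMA m K ⊆ Set.pi Set.univ (fun _ : Fin m => Set.Icc (-1 : ℝ) 1) := by
    intro x hx
    obtain ⟨I, hI, hx⟩ := Set.mem_iUnion₂.1 hx
    intro i _
    rcases Classical.em (i ∈ I) with hi | hi
    · exact hx.1 i hi
    · rcases hx.2 i hi with h | h <;> simp [h]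
  have hcomp : IsCompact (Set.pi Set.univ (fun _ : Fin m => Set.Icc (-1 : ℝ) 1)) :=
    isCompact_univ_pi (fun _ => isCompact_Icc)
  refine hcomp.of_isClosed_subset ?_ hsub
  have : Set.Finite K := Set.toFinite K
  refine Set.Finite.isClosed_biUnion this ?_
  intro I _
  have h1 : IsClosed {x : Fin m → ℝ | ∀ i ∈ I, x i ∈ Set.Icc (-1 : ℝ) 1} := by
    have : {x : Fin m → ℝ | ∀ i ∈ I, x i ∈ Set.Icc (-1 : ℝ) 1}
        = ⋂ i ∈ (I : Set (Fin m)), (fun x : Fin m → ℝ => x i) ⁻¹' Set.Icc (-1 : ℝ) 1 := by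
      ext x; simp
    rw [this]
    exact isClosed_biInter fun i _ => (isClosed_Icc).preimage (continuous_apply i)
  have h2 : IsClosed {x : Fin m → ℝ | ∀ j ∉ I, x j = -1 ∨ x j = 1} := by
    have : {x : Fin m → ℝ | ∀ j ∉ I, x j = -1 ∨ x j = 1}
        = ⋂ j ∈ ((I : Set (Fin m))ᶜ), (fun x : Fin m → ℝ => x j) ⁻¹' {-1, 1} := by
      ext x; simp
    rw [this]
    exact isClosed_biInter fun j _ =>
      (Set.Finite.isClosed (by simp)).preimage (continuous_apply j)
  have : {x : Fin m → ℝ | (∀ i ∈ I, x i ∈ Set.Icc (-1 : ℝ) 1) ∧ ∀ j ∉ I, x j = -1 ∨ x j = 1}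
      = {x | ∀ i ∈ I, x i ∈ Set.Icc (-1 : ℝ) 1} ∩ {x | ∀ j ∉ I, x j = -1 ∨ x j = 1} := rfl
  rw [this]
  exact h1.inter h2

/-- The quotient of `R_K` by the sign action of `{±1}^m` is homeomorphic to `cc(K)`,
via the map induced by the coordinatewise squaring map. -/
theorem rma_quotient_homeo_ccK (m : ℕ) (K : Set (Finset (Fin m)))
    (hempty : ∅ ∈ K) (hdown : ∀ I ∈ K, ∀ J ⊆ I, J ∈ K) :
    ∃ h : Quot (signRel m K) ≃ₜ (ccK m K),
      ∀ x : RMA m K,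
        ((h (Quot.mk _ x) : Fin m → ℝ)) = fun i => ((x : Fin m → ℝ) i) ^ 2 := by
  have compat := rho_compat m K
  -- the equivalence
  have left_inv : ∀ q : Quot (signRel m K),
      Quot.mk (signRel m K) (sqrtMap m K (Quot.lift (rhoMap m K) compat q)) = q := by
    refine Quot.ind ?_
    intro x
    refine Quot.sound (abs_signRel m K x _ ?_)
    intro i
    show Real.sqrt (((x : Fin m → ℝ) i) ^ 2) = _
    rw [Real.sqrt_sq_eq_abs]
  have right_inv : ∀ y : ccK m K,
      Quot.lift (rhoMap m K) compat (Quot.mk _ (sqrtMap m K y)) = y := by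
    intro y
    apply Subtype.ext
    funext i
    show (Real.sqrt ((y : Fin m → ℝ) i)) ^ 2 = (y : Fin m → ℝ) i
    exact Real.sq_sqrt (ccK_nonneg m K y i)
  let e : Quot (signRel m K) ≃ ccK m K :=
    { toFun := Quot.lift (rhoMap m K) compat
      invFun := fun y => Quot.mk _ (sqrtMap m K y)
      left_inv := left_inv
      right_inv := right_inv }
  have hcont : Continuous (Quot.lift (rhoMap m K) compat) := by
    apply continuous_quot_lift
    apply Continuous.subtype_mk
    exact continuous_pi fun i =>
      ((continuous_apply i).comp continuous_subtype_val).pow 2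
  have : CompactSpace (RMA m K) := isCompact_iff_compactSpace.1 (RMA_isCompact m K)
  have hcs : CompactSpace (Quot (signRel m K)) := by
    constructor
    have : Set.univ = Set.range (Quot.mk (signRel m K)) := by
      ext q
      simp only [Set.mem_univ, true_iff, Set.mem_range]
      exact Quot.exists_rep q
    rw [this]
    exact isCompact_range continuous_quot_mk
  refine ⟨Continuous.homeoOfEquivCompactToT2 (f := e) hcont, ?_⟩
  intro x
  show ((rhoMap m K x : Fin m → ℝ)) = _
  rfl
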